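/- Let S₂ : ℝ → ℂ be continuous with |S₂| = 1 and S₂(-θ) = conj(S₂(θ)), and suppose S₂ extends analytically to the strip S(-κ,κ) without zeros there, normalized by S₂(0) = ε with ε = ±1. Write S₂(ζ) = ε e^{2iδ(ζ)} with δ analytic on S(-κ,κ), δ(0) = 0. For n ≥ 2 define Y_n(θ₁,...,θ_n) := ∏_{1≤k<l≤n} ε e^{iδ(θ_k - θ_l)}. Then the multiplication operator by Y_n is a unitary on L²(ℝⁿ) intertwining the S₂-representation D_n of S_n with the representation D_n^ε built from the constant scattering function ε: D_n^ε(π) Y_n = Y_n D_n(π) for all π ∈ S_n. In particular Y_n maps the S₂-symmetric subspace of L²(ℝⁿ) unitarily onto the totally symmetric (ε = +1) or totally antisymmetric (ε = -1) subspace. -/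

import Mathlib

open MeasureTheory Complex

/-- The `n`-particle `L²` space over `ℝⁿ`. -/
noncomputable abbrev L2n (n : ℕ) :=
  MeasureTheory.Lp ℂ 2 (MeasureTheory.volume : MeasureTheory.Measure (Fin n → ℝ))

/-- The defining almost-everywhere action of the operator `D_n(τ_k)` on `L²(ℝⁿ)` for a
scattering function `S` (evaluated on the reals): `(D_n(τ_k) f)(θ) = S(θ_{k+1} - θ_k) ·
f(θ₁,…,θ_{k+1},θ_k,…,θ_n)`. -/
def IsDnGeneratorC {n : ℕ} (S : ℂ → ℂ) (k : ℕ) (hk : k + 1 < n)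
    (D : L2n n →L[ℂ] L2n n) : Prop :=
  ∀ f : L2n n,
    ∀ᵐ θ ∂(volume : Measure (Fin n → ℝ)),
      D f θ = S (((θ ⟨k + 1, hk⟩ - θ ⟨k, Nat.lt_of_succ_lt hk⟩ : ℝ)) : ℂ) *
        f (fun i => θ (Equiv.swap (⟨k, Nat.lt_of_succ_lt hk⟩ : Fin n) ⟨k + 1, hk⟩ i))

/-!
`Y_n` is multiplication by a function of modulus one (`δ` is real on `ℝ` because `|S₂| = 1`),
hence unitary. An adjacent transposition `τ_j` changes only the factor of the pair `(j, j+1)`,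
from `ε e^{iδ(θ_j - θ_{j+1})}` to `ε e^{iδ(θ_{j+1} - θ_j)}`. Since `S₂(t) S₂(-t) = 1` and
`δ(0) = 0`, continuity makes `e^{iδ}` odd in the sense `e^{iδ(-t)} e^{iδ(t)} = 1`, so the ratio
of the two factors is `e^{2iδ(θ_{j+1} - θ_j)} = ε S₂(θ_{j+1} - θ_j)`: this is the intertwining
relation on generators, and adjacent transpositions generate `S_n`. The statements about the
symmetric subspaces follow from the intertwining relation and the bijectivity of `Y_n`.
-/

theorem volume_measurePreserving_comp_perm {ι α : Type*} [Fintype ι]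
    [MeasureSpace α] [SigmaFinite (volume : Measure α)] (σ : Equiv.Perm ι) :
    MeasurePreserving (fun θ : ι → α => θ ∘ σ) volume volume := by
  convert volume_measurePreserving_piCongrLeft (fun _ : ι => α) σ.symm using 1
  funext θ i
  simpa using (MeasurableEquiv.piCongrLeft_apply_apply (β := fun _ : ι => α) σ.symm θ (σ i)).symm

section UnimodularMultiplier

variable {α 𝕜 : Type*} [MeasurableSpace α] {μ : Measure α} [RCLike 𝕜] {p : ENNReal}
  [Fact (1 ≤ p)] {Y : Lp 𝕜 p μ →L[𝕜] Lp 𝕜 p μ} {Φ : α → 𝕜}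

theorem norm_map_of_ae_eq_unimodular_mul (hΦ : ∀ x, ‖Φ x‖ = 1)
    (hY : ∀ f, Y f =ᵐ[μ] fun x => Φ x * f x) (f : Lp 𝕜 p μ) : ‖Y f‖ = ‖f‖ := by
  rw [Lp.norm_def, Lp.norm_def, eLpNorm_congr_ae (hY f)]
  congr 1
  exact eLpNorm_congr_norm_ae (.of_forall fun x => by rw [norm_mul, hΦ, one_mul])

theorem surjective_of_ae_eq_unimodular_mul (hΦm : AEStronglyMeasurable Φ μ)
    (hΦ : ∀ x, ‖Φ x‖ = 1) (hY : ∀ f, Y f =ᵐ[μ] fun x => Φ x * f x) :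
    Function.Surjective Y := by
  intro g
  have hmem : MemLp (fun x => starRingEnd 𝕜 (Φ x) * g x) p μ :=
    (Lp.memLp g).congr_norm (hΦm.star.mul (Lp.aestronglyMeasurable g))
      (.of_forall fun x => by rw [norm_mul, RCLike.norm_conj, hΦ, one_mul])
  refine ⟨hmem.toLp _, Lp.ext ?_⟩
  filter_upwards [hY (hmem.toLp _), hmem.coeFn_toLp] with x hYx hx
  rw [hYx, hx, ← mul_assoc, RCLike.mul_conj, hΦ]
  simp

theorem exists_linearIsometryEquiv_of_ae_eq_unimodular_mul (hΦm : AEStronglyMeasurable Φ μ)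
    (hΦ : ∀ x, ‖Φ x‖ = 1) (hY : ∀ f, Y f =ᵐ[μ] fun x => Φ x * f x) :
    ∃ Yu : Lp 𝕜 p μ ≃ₗᵢ[𝕜] Lp 𝕜 p μ, ∀ f, Yu f = Y f :=
  ⟨.ofSurjective ⟨Y.toLinearMap, norm_map_of_ae_eq_unimodular_mul hΦ hY⟩
    (surjective_of_ae_eq_unimodular_mul hΦm hΦ hY), fun _ => rfl⟩

end UnimodularMultiplier

theorem Fin.swap_lt_swap_of_lt_of_ne_adjacent {n : ℕ} {a b p q : Fin n} (hab : (b : ℕ) = a + 1)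
    (hpq : p < q) (hne : (p, q) ≠ (a, b)) : Equiv.swap a b p < Equiv.swap a b q := by
  simp only [Ne, Prod.mk.injEq, Fin.ext_iff] at hne
  simp only [Equiv.swap_apply_def, Fin.lt_def, Fin.ext_iff] at hpq ⊢
  split_ifs <;> omega

def ltPairs (n : ℕ) : Finset (Fin n × Fin n) :=
  Finset.univ.filter fun p : Fin n × Fin n => p.1 < p.2

/-- The adjacent transposition `(a b)` permutes the increasing pairs other than `(a, b)`. -/
theorem prod_ltPairs_swap_adjacent {M : Type*} [CommMonoid M] {n : ℕ} {a b : Fin n}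
    (hab : (b : ℕ) = a + 1) (F : Fin n × Fin n → M) :
    (∏ p ∈ ltPairs n, F (Equiv.swap a b p.1, Equiv.swap a b p.2)) * F (a, b) =
      (∏ p ∈ ltPairs n, F p) * F (b, a) := by
  have hab_mem : (a, b) ∈ ltPairs n :=
    Finset.mem_filter.2 ⟨Finset.mem_univ _, Fin.lt_def.2 (by omega : (a : ℕ) < b)⟩
  set τ := Equiv.prodCongr (Equiv.swap a b) (Equiv.swap a b)
  have hτ_invol : ∀ p, τ (τ p) = p := fun p =>
    Prod.ext (Equiv.swap_apply_self _ _ _) (Equiv.swap_apply_self _ _ _)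
  have hτ_mem : ∀ p, p ∈ (ltPairs n).erase (a, b) → τ p ∈ (ltPairs n).erase (a, b) := by
    rintro ⟨p, q⟩ hpq
    simp only [ltPairs, Finset.mem_erase, Finset.mem_filter, Finset.mem_univ, true_and] at hpq ⊢
    refine ⟨fun h => ?_, Fin.swap_lt_swap_of_lt_of_ne_adjacent hab hpq.2 hpq.1⟩
    simp only [τ, Equiv.prodCongr_apply, Prod.map, Prod.mk.injEq, Equiv.swap_apply_eq_iff,
      Equiv.swap_apply_left, Equiv.swap_apply_right] at h
    exact absurd hpq.2 (by rw [h.1, h.2, Fin.lt_def]; omega)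
  have hτ_prod : ∏ p ∈ (ltPairs n).erase (a, b), F (Equiv.swap a b p.1, Equiv.swap a b p.2) =
      ∏ p ∈ (ltPairs n).erase (a, b), F p :=
    Finset.prod_equiv τ (fun p => ⟨hτ_mem p, fun h => hτ_invol p ▸ hτ_mem _ h⟩) fun _ _ => rfl
  rw [← Finset.mul_prod_erase _ _ hab_mem, ← Finset.mul_prod_erase _ _ hab_mem,
    Equiv.swap_apply_left, Equiv.swap_apply_right, hτ_prod]
  ac_rfl

section ScatteringPhase

variable {S : ℂ → ℂ} {ε : ℂ} {d : ℝ → ℂ}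

theorem norm_exp_I_mul_eq_one (hε : ‖ε‖ = 1) (hSd : ∀ t : ℝ, S t = ε * exp (2 * I * d t))
    (hS_mod : ∀ t : ℝ, ‖S t‖ = 1) (t : ℝ) : ‖exp (I * d t)‖ = 1 := by
  have h := hS_mod t
  rw [hSd, norm_mul, hε, one_mul, show 2 * I * d t = I * d t + I * d t by ring, exp_add,
    norm_mul, ← sq] at h
  exact (pow_eq_one_iff_of_nonneg (norm_nonneg _) two_ne_zero).1 h

theorem exp_two_I_mul_mul_exp_two_I_mul_neg (hε : ε * ε = 1)
    (hSd : ∀ t : ℝ, S t = ε * exp (2 * I * d t)) (hS_mod : ∀ t : ℝ, ‖S t‖ = 1)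
    (hS_herm : ∀ t : ℝ, S (-t) = starRingEnd ℂ (S t)) (t : ℝ) :
    exp (2 * I * d t) * exp (2 * I * d (-t)) = 1 := by
  have hS : S t * S (-t) = 1 := by
    rw [hS_herm, mul_conj, normSq_eq_norm_sq, hS_mod]
    norm_num
  rw [← ofReal_neg, hSd, hSd] at hS
  linear_combination hS - exp (2 * I * d t) * exp (2 * I * d (-t)) * hε

theorem exp_I_mul_neg_mul_exp_I_mul_eq_one (hd : Continuous d) (hd0 : d 0 = 0)
    (h : ∀ t, exp (2 * I * d t) * exp (2 * I * d (-t)) = 1) (t : ℝ) :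
    exp (I * d (-t)) * exp (I * d t) = 1 := by
  set g : ℝ → ℂ := fun t => exp (I * d (-t)) * exp (I * d t)
  have hg_sq : Set.EqOn (g ^ 2) 1 Set.univ := fun t _ => by
    simp only [g, Pi.pow_apply, Pi.one_apply]
    rw [← h t, ← exp_add, ← exp_add, sq, ← exp_add]
    ring_nf
  rcases isPreconnected_univ.eq_one_or_eq_neg_one_of_sq_eq (by fun_prop) hg_sq with hg | hg
  · exact hg (Set.mem_univ t)
  · have h0 := hg (Set.mem_univ 0)
    norm_num [g, hd0] at h0

end ScatteringPhase

/-- The multiplier `Y_n(θ)`, written with the restriction `d t = δ t` of `δ` to the real line. -/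
noncomputable def pairPhase {n : ℕ} (ε : ℂ) (d : ℝ → ℂ) (θ : Fin n → ℝ) : ℂ :=
  ∏ p ∈ ltPairs n, ε * exp (I * d (θ p.1 - θ p.2))

section PairPhase

variable {n : ℕ} {ε : ℂ} {d : ℝ → ℂ}

theorem continuous_pairPhase (hd : Continuous d) : Continuous (pairPhase (n := n) ε d) := by
  unfold pairPhase
  fun_prop

theorem norm_pairPhase (hε : ‖ε‖ = 1) (hd : ∀ t, ‖exp (I * d t)‖ = 1) (θ : Fin n → ℝ) :
    ‖pairPhase ε d θ‖ = 1 := by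
  simp [pairPhase, norm_prod, hε, hd]

theorem pairPhase_comp_swap {a b : Fin n} (hab : (b : ℕ) = a + 1) (hε : ε ≠ 0)
    (hd : ∀ t, exp (I * d (-t)) * exp (I * d t) = 1) (θ : Fin n → ℝ) :
    ε * pairPhase ε d (θ ∘ Equiv.swap a b) =
      pairPhase ε d θ * (ε * exp (2 * I * d (θ b - θ a))) := by
  set F : Fin n × Fin n → ℂ := fun p => ε * exp (I * d (θ p.1 - θ p.2))
  have hF : pairPhase ε d (θ ∘ Equiv.swap a b) * F (a, b) = pairPhase ε d θ * F (b, a) :=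
    prod_ltPairs_swap_adjacent hab F
  have hodd := hd (θ b - θ a)
  rw [neg_sub] at hodd
  apply mul_right_cancel₀ (mul_ne_zero hε (exp_ne_zero _) : F (a, b) ≠ 0)
  rw [mul_assoc, hF, show 2 * I * d (θ b - θ a) = I * d (θ b - θ a) + I * d (θ b - θ a) by ring,
    exp_add]
  linear_combination (-(pairPhase ε d θ * ε * ε * exp (I * d (θ b - θ a)))) * hodd

end PairPhase

theorem intertwines_of_isDnGeneratorC {n k : ℕ} (hk : k + 1 < n) {S : ℂ → ℂ} {ε : ℂ}
    {Φ : (Fin n → ℝ) → ℂ} {D Dε Y : L2n n →L[ℂ] L2n n} (hD : IsDnGeneratorC S k hk D)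
    (hDε : IsDnGeneratorC (fun _ => ε) k hk Dε) (hY : ∀ f, Y f =ᵐ[volume] fun θ => Φ θ * f θ)
    (hΦ : ∀ θ : Fin n → ℝ,
      ε * Φ (θ ∘ Equiv.swap ⟨k, Nat.lt_of_succ_lt hk⟩ ⟨k + 1, hk⟩) =
        Φ θ * S ((θ ⟨k + 1, hk⟩ - θ ⟨k, Nat.lt_of_succ_lt hk⟩ : ℝ) : ℂ))
    (f : L2n n) : Dε (Y f) = Y (D f) := by
  have hY_swap := (volume_measurePreserving_comp_perm
    (Equiv.swap (⟨k, Nat.lt_of_succ_lt hk⟩ : Fin n) ⟨k + 1, hk⟩)).quasiMeasurePreserving.ae_eq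
      (hY f)
  refine Lp.ext ?_
  filter_upwards [hDε (Y f), hY_swap, hY (D f), hD f] with θ hDεθ hYσθ hYθ hDθ
  rw [hDεθ, hYθ, hDθ]
  simp only [Function.comp_def] at hYσθ
  rw [hYσθ, ← mul_assoc, ← mul_assoc, ← Function.comp_def, hΦ]

theorem map_apply_eq_of_forall_adjacent_swap {n : ℕ} {𝕜 E F : Type*} [NormedField 𝕜]
    [SeminormedAddCommGroup E] [NormedSpace 𝕜 E] [SeminormedAddCommGroup F] [NormedSpace 𝕜 F]
    (ρ : Equiv.Perm (Fin n) →* (E ≃ₗᵢ[𝕜] E)) (ρ' : Equiv.Perm (Fin n) →* (F ≃ₗᵢ[𝕜] F))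
    (Y : E → F)
    (h : ∀ (k : ℕ) (hk : k + 1 < n) (f : E),
      ρ' (Equiv.swap ⟨k, Nat.lt_of_succ_lt hk⟩ ⟨k + 1, hk⟩) (Y f) =
        Y (ρ (Equiv.swap ⟨k, Nat.lt_of_succ_lt hk⟩ ⟨k + 1, hk⟩) f))
    (π : Equiv.Perm (Fin n)) (f : E) : ρ' π (Y f) = Y (ρ π f) := by
  cases n with
  | zero => simp [Subsingleton.elim π 1]
  | succ m =>
    have hπ : π ∈ Submonoid.closure (Set.range fun i : Fin m => Equiv.swap i.castSucc i.succ) := by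
      rw [Equiv.Perm.mclosure_swap_castSucc_succ]
      trivial
    induction hπ using Submonoid.closure_induction generalizing f with
    | mem _ hσ =>
      obtain ⟨i, rfl⟩ := hσ
      exact h i (Nat.succ_lt_succ i.isLt) f
    | one => simp
    | mul σ τ _ _ hσ hτ =>
      simp only [map_mul, LinearIsometryEquiv.coe_mul, Function.comp_apply, hτ, hσ]

theorem statement18_general {n : ℕ} (κ : ℝ) (hκ : 0 < κ)
    (S₂ : ℂ → ℂ) (ε : ℂ) (hε : ε = 1 ∨ ε = -1)
    (hS_mod : ∀ θ : ℝ, ‖S₂ (θ : ℂ)‖ = 1)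
    (hS_herm : ∀ θ : ℝ, S₂ (-(θ : ℂ)) = (starRingEnd ℂ) (S₂ (θ : ℂ)))
    (δ : ℂ → ℂ)
    (hδ_an : DifferentiableOn ℂ δ {ζ : ℂ | -κ < ζ.im ∧ ζ.im < κ})
    (hδ0 : δ 0 = 0)
    (hδS : ∀ ζ : ℂ, -κ < ζ.im → ζ.im < κ →
      S₂ ζ = ε * Complex.exp (2 * Complex.I * δ ζ))
    (Y : L2n n →L[ℂ] L2n n)
    (hY : ∀ f : L2n n, ∀ᵐ θ ∂(volume : Measure (Fin n → ℝ)),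
      Y f θ =
        (∏ p ∈ Finset.univ.filter (fun p : Fin n × Fin n => p.1 < p.2),
          ε * Complex.exp (Complex.I * δ (((θ p.1 - θ p.2 : ℝ)) : ℂ))) * f θ)
    (ρ ρε : Equiv.Perm (Fin n) →* (L2n n ≃ₗᵢ[ℂ] L2n n))
    (hρ : ∀ (k : ℕ) (hk : k + 1 < n),
      IsDnGeneratorC S₂ k hk
        ((ρ (Equiv.swap (⟨k, Nat.lt_of_succ_lt hk⟩ : Fin n)
            ⟨k + 1, hk⟩)).toLinearIsometry.toContinuousLinearMap))
    (hρε : ∀ (k : ℕ) (hk : k + 1 < n),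
      IsDnGeneratorC (fun _ => ε) k hk
        ((ρε (Equiv.swap (⟨k, Nat.lt_of_succ_lt hk⟩ : Fin n)
            ⟨k + 1, hk⟩)).toLinearIsometry.toContinuousLinearMap)) :
    (∃ Yu : L2n n ≃ₗᵢ[ℂ] L2n n, ∀ f, Yu f = Y f) ∧
    (∀ (π : Equiv.Perm (Fin n)) (f : L2n n), ρε π (Y f) = Y (ρ π f)) ∧
    (∀ f : L2n n, (∀ π, ρ π f = f) → ∀ π, ρε π (Y f) = Y f) ∧
    (∀ g : L2n n, (∀ π, ρε π g = g) →
      ∃ f : L2n n, (∀ π, ρ π f = f) ∧ Y f = g) := by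
  set d : ℝ → ℂ := fun t => δ t
  have hreal : ∀ t : ℝ, (t : ℂ) ∈ {ζ : ℂ | -κ < ζ.im ∧ ζ.im < κ} := fun t => by simp [hκ]
  have hSd : ∀ t : ℝ, S₂ t = ε * exp (2 * I * d t) := fun t => hδS t (hreal t).1 (hreal t).2
  have hd : Continuous d := hδ_an.continuousOn.comp_continuous continuous_ofReal hreal
  have hε_norm : ‖ε‖ = 1 := by rcases hε with rfl | rfl <;> simp
  have hε_sq : ε * ε = 1 := by rcases hε with rfl | rfl <;> simp
  have hodd := exp_I_mul_neg_mul_exp_I_mul_eq_one hd (by simpa [d] using hδ0)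
    (exp_two_I_mul_mul_exp_two_I_mul_neg hε_sq hSd hS_mod hS_herm)
  obtain ⟨Yu, hYu⟩ := exists_linearIsometryEquiv_of_ae_eq_unimodular_mul
    (continuous_pairPhase hd).aestronglyMeasurable
    (norm_pairPhase hε_norm (norm_exp_I_mul_eq_one hε_norm hSd hS_mod)) hY
  have hcomm : ∀ π f, ρε π (Y f) = Y (ρ π f) :=
    map_apply_eq_of_forall_adjacent_swap ρ ρε Y fun k hk =>
      intertwines_of_isDnGeneratorC (Φ := pairPhase ε d) hk (hρ k hk) (hρε k hk) hY
        fun θ => by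
          rw [pairPhase_comp_swap rfl (left_ne_zero_of_mul_eq_one hε_sq) hodd, hSd]
  refine ⟨⟨Yu, hYu⟩, hcomm, fun f hf π => by rw [hcomm, hf], fun g hg => ?_⟩
  obtain ⟨f, rfl⟩ : ∃ f, Y f = g := ⟨Yu.symm g, by rw [← hYu, Yu.apply_symm_apply]⟩
  refine ⟨f, fun π => Yu.injective ?_, rfl⟩
  rw [hYu, hYu, ← hcomm, hg]

/-- with `S₂ = ε e^{2iδ}` analytic and nonvanishing on `S(-κ,κ)`, `δ(0) = 0`,
`ε = ±1`, the multiplication operator by `Y_n(θ) = ∏_{k<l} ε e^{iδ(θ_k-θ_l)}` is a unitary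
on `L²(ℝⁿ)` intertwining the `S₂`-representation `D_n` of the symmetric group with the
representation `D_n^ε` built from the constant scattering function `ε`; in particular it
maps the `S₂`-symmetric subspace unitarily onto the totally symmetric (`ε = +1`) or
totally antisymmetric (`ε = -1`) subspace. -/
theorem statement18 {n : ℕ} (κ : ℝ) (hκ : 0 < κ)
    (S₂ : ℂ → ℂ) (ε : ℂ) (hε : ε = 1 ∨ ε = -1)
    (hS_an : DifferentiableOn ℂ S₂ {ζ : ℂ | -κ < ζ.im ∧ ζ.im < κ})
    (hS_ne : ∀ ζ : ℂ, -κ < ζ.im → ζ.im < κ → S₂ ζ ≠ 0)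
    (hS_mod : ∀ θ : ℝ, ‖S₂ (θ : ℂ)‖ = 1)
    (hS_herm : ∀ θ : ℝ, S₂ (-(θ : ℂ)) = (starRingEnd ℂ) (S₂ (θ : ℂ)))
    (hS0 : S₂ 0 = ε)
    (δ : ℂ → ℂ)
    (hδ_an : DifferentiableOn ℂ δ {ζ : ℂ | -κ < ζ.im ∧ ζ.im < κ})
    (hδ0 : δ 0 = 0)
    (hδS : ∀ ζ : ℂ, -κ < ζ.im → ζ.im < κ →
      S₂ ζ = ε * Complex.exp (2 * Complex.I * δ ζ))
    (Y : L2n n →L[ℂ] L2n n)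
    (hY : ∀ f : L2n n, ∀ᵐ θ ∂(volume : Measure (Fin n → ℝ)),
      Y f θ =
        (∏ p ∈ Finset.univ.filter (fun p : Fin n × Fin n => p.1 < p.2),
          ε * Complex.exp (Complex.I * δ (((θ p.1 - θ p.2 : ℝ)) : ℂ))) * f θ)
    (ρ ρε : Equiv.Perm (Fin n) →* (L2n n ≃ₗᵢ[ℂ] L2n n))
    (hρ : ∀ (k : ℕ) (hk : k + 1 < n),
      IsDnGeneratorC S₂ k hk
        ((ρ (Equiv.swap (⟨k, Nat.lt_of_succ_lt hk⟩ : Fin n)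
            ⟨k + 1, hk⟩)).toLinearIsometry.toContinuousLinearMap))
    (hρε : ∀ (k : ℕ) (hk : k + 1 < n),
      IsDnGeneratorC (fun _ => ε) k hk
        ((ρε (Equiv.swap (⟨k, Nat.lt_of_succ_lt hk⟩ : Fin n)
            ⟨k + 1, hk⟩)).toLinearIsometry.toContinuousLinearMap)) :
    (∃ Yu : L2n n ≃ₗᵢ[ℂ] L2n n, ∀ f, Yu f = Y f) ∧
    (∀ (π : Equiv.Perm (Fin n)) (f : L2n n), ρε π (Y f) = Y (ρ π f)) ∧
    (∀ f : L2n n, (∀ π, ρ π f = f) → ∀ π, ρε π (Y f) = Y f) ∧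
    (∀ g : L2n n, (∀ π, ρε π g = g) →
      ∃ f : L2n n, (∀ π, ρ π f = f) ∧ Y f = g) :=
  statement18_general κ hκ S₂ ε hε hS_mod hS_herm δ hδ_an hδ0 hδS Y hY ρ ρε hρ hρε
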